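/- arXiv:1011.2945 — 4 statements merged into one kernel-verified Lean document; each statement's English description precedes it below -/
import Mathlib

section
/- For every p in (0,1) and every β > 0, B(β) := f(β) + f(2β) - f(3β) > 0, where f(β) = -ln(p + (1-p)e^{-β}). -/
theorem stmt_1 (p : ℝ) (hp : p ∈ Set.Ioo (0:ℝ) 1) (β : ℝ) (hβ : 0 < β)
    (f : ℝ → ℝ) (hf : ∀ x, f x = -Real.log (p + (1 - p) * Real.exp (-x))) :
    f β + f (2 * β) - f (3 * β) > 0 := by
  obtain ⟨hp0, hp1⟩ := hp
  set a := Real.exp (-β) with ha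
  have ha0 : 0 < a := Real.exp_pos _
  have ha1 : a < 1 := by
    rw [ha]; exact Real.exp_lt_one_iff.mpr (by linarith)
  have e2 : Real.exp (-(2 * β)) = a * a := by
    rw [show -(2 * β) = (-β) + (-β) by ring, Real.exp_add]
  have e3 : Real.exp (-(3 * β)) = a * a * a := by
    rw [show -(3 * β) = (-β) + (-β) + (-β) by ring, Real.exp_add, Real.exp_add]
  have hq : 0 < 1 - p := by linarith
  have g1 : (0:ℝ) < p + (1 - p) * a := by positivity
  have g2 : (0:ℝ) < p + (1 - p) * (a * a) := by positivity
  have g3 : (0:ℝ) < p + (1 - p) * (a * a * a) := by positivity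
  have key : (p + (1 - p) * a) * (p + (1 - p) * (a * a)) < p + (1 - p) * (a * a * a) := by
    nlinarith [mul_pos (mul_pos (mul_pos hp0 hq) (by linarith : (0:ℝ) < 1 - a))
      (by nlinarith : (0:ℝ) < 1 - a * a)]
  have hlog : Real.log (p + (1 - p) * a) + Real.log (p + (1 - p) * (a * a)) <
      Real.log (p + (1 - p) * (a * a * a)) := by
    rw [← Real.log_mul (ne_of_gt g1) (ne_of_gt g2)]
    exact Real.log_lt_log (mul_pos g1 g2) key
  rw [hf, hf, hf, e2, e3]
  linarith
end

section
/- For every p in (0,1) and every β > 0, f(β) + f(3β) - f(2β) - f(4β)/2 > 0, where f(β) = -ln(p + (1-p)e^{-β}). -/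
theorem stmt_3 (p : ℝ) (hp : p ∈ Set.Ioo (0:ℝ) 1) (β : ℝ) (hβ : 0 < β)
    (f : ℝ → ℝ) (hf : ∀ x, f x = -Real.log (p + (1 - p) * Real.exp (-x))) :
    f β + f (3 * β) - f (2 * β) - f (4 * β) / 2 > 0 := by
  obtain ⟨hp0, hp1⟩ := hp
  have hq : 0 < 1 - p := by linarith
  set u := Real.exp (-β) with hu
  have hu0 : 0 < u := Real.exp_pos _
  have hu1 : u < 1 := by
    rw [hu, Real.exp_lt_one_iff]; linarith
  have en : ∀ n : ℕ, Real.exp (-((n : ℝ) * β)) = u ^ n := by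
    intro n
    rw [show -((n : ℝ) * β) = (n : ℝ) * (-β) by ring, Real.exp_nat_mul, hu]
  have e2 : Real.exp (-(2 * β)) = u ^ 2 := by
    have := en 2; norm_num at this; exact this
  have e3 : Real.exp (-(3 * β)) = u ^ 3 := by
    have := en 3; norm_num at this; exact this
  have e4 : Real.exp (-(4 * β)) = u ^ 4 := by
    have := en 4; norm_num at this; exact this
  have h1u : 0 < 1 - u := by linarith
  set A1 := p + (1 - p) * u with hA1
  set A2 := p + (1 - p) * u ^ 2 with hA2
  set A3 := p + (1 - p) * u ^ 3 with hA3
  set A4 := p + (1 - p) * u ^ 4 with hA4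
  have hA1p : 0 < A1 := by positivity
  have hA2p : 0 < A2 := by positivity
  have hA3p : 0 < A3 := by positivity
  have hA4p : 0 < A4 := by positivity
  have key1 : A1 ^ 2 < A2 := by
    have h : 0 < p * (1 - p) * (1 - u) ^ 2 := by positivity
    nlinarith [h]
  have key2 : A3 ^ 2 < A2 * A4 := by
    have h : 0 < p * (1 - p) * u ^ 2 * (1 - u) ^ 2 := by positivity
    nlinarith [h]
  have chain : A1 ^ 2 * A3 ^ 2 < A2 ^ 2 * A4 := by
    calc A1 ^ 2 * A3 ^ 2 < A2 * A3 ^ 2 :=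
          mul_lt_mul_of_pos_right key1 (by positivity)
      _ < A2 * (A2 * A4) := mul_lt_mul_of_pos_left key2 hA2p
      _ = A2 ^ 2 * A4 := by ring
  have hlog : Real.log (A1 ^ 2 * A3 ^ 2) < Real.log (A2 ^ 2 * A4) :=
    Real.log_lt_log (by positivity) chain
  rw [Real.log_mul (by positivity) (by positivity),
      Real.log_mul (by positivity) (by positivity),
      Real.log_pow, Real.log_pow, Real.log_pow] at hlog
  push_cast at hlog
  rw [hf, hf, hf, hf, e2, e3, e4, ← hu, ← hA1, ← hA2, ← hA3, ← hA4]
  linarith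
end

section
/- If c > 2 and p ∈ (0,1), then there is a unique β̄_c ∈ (0,∞) satisfying f(2β̄_c) - f(4β̄_c)/2 = ln(1/p)/c, where f(β) = -ln(p + (1-p)e^{-β}); moreover the function β ↦ f(2β) - f(4β)/2 is strictly increasing from 0 to (ln(1/p))/2 as β goes from 0 to ∞. -/
/-!
Put `u = exp (-2β)` and let `Y` be `1` with probability `p` and `u` with probability `1 - p`.
Then `f (2β) - f (4β) / 2 = ½ log (E[Y²] / E[Y]²)`, and since `Var Y = p (1 - p) (1 - u)²`,
`E[Y²] / E[Y]² = 1 + p (1 - p) w²` with `w = (1 - u) / (p + (1 - p) u)`. As `β` runs over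
`[0, ∞)`, `w` increases continuously from `0` to `1 / p`, so the function increases from
`0` to `½ log (1 + (1 - p) / p) = ½ log (1 / p)`; the intermediate value theorem does the rest.
-/

open Real Filter Topology Set

lemma existsUnique_pos_eq_of_strictMonoOn {g : ℝ → ℝ} (hcont : ContinuousOn g (Ici 0))
    (hmono : StrictMonoOn g (Ici 0)) {L : ℝ} (hlim : Tendsto g atTop (𝓝 L)) {y : ℝ}
    (hy : y ∈ Ioo (g 0) L) : ∃! β, β ∈ Ioi 0 ∧ g β = y := by
  obtain ⟨B, hyB, hB⟩ :=
    ((hlim.eventually (eventually_gt_nhds hy.2)).and (eventually_ge_atTop 0)).exists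
  obtain ⟨β, hβ, rfl⟩ :=
    intermediate_value_Icc hB (hcont.mono Icc_subset_Ici_self) ⟨hy.1.le, hyB.le⟩
  have hβ0 : 0 < β := hβ.1.lt_of_ne (by rintro rfl; exact hy.1.false)
  exact ⟨β, ⟨hβ0, rfl⟩, fun x ⟨(hx : 0 < x), hxβ⟩ => hmono.injOn hx.le hβ0.le hxβ⟩

lemma continuous_log_one_add_mul_sq_div_two {a : ℝ} (ha : 0 ≤ a) :
    Continuous fun x => log (1 + a * x ^ 2) / 2 :=
  ((continuous_const.add (continuous_const.mul (continuous_pow 2))).log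
    fun x => (add_pos_of_pos_of_nonneg one_pos (mul_nonneg ha (sq_nonneg x))).ne').div_const 2

lemma strictMonoOn_log_one_add_mul_sq_div_two {a : ℝ} (ha : 0 < a) :
    StrictMonoOn (fun x => log (1 + a * x ^ 2) / 2) (Ici 0) := by
  intro x (hx : 0 ≤ x) y _ hxy
  dsimp only
  gcongr

section gapRatio

variable {p : ℝ}

noncomputable def gapRatio (p β : ℝ) : ℝ := (1 - exp (-(2 * β))) / (p + (1 - p) * exp (-(2 * β)))

lemma gapRatio_denom_pos (hp0 : 0 < p) (hp1 : p ≤ 1) (β : ℝ) :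
    0 < p + (1 - p) * exp (-(2 * β)) :=
  add_pos_of_pos_of_nonneg hp0 (mul_nonneg (sub_nonneg.2 hp1) (exp_pos _).le)

@[simp]
lemma gapRatio_zero : gapRatio p 0 = 0 := by
  simp [gapRatio]

lemma gapRatio_nonneg (hp0 : 0 < p) (hp1 : p ≤ 1) {β : ℝ} (hβ : 0 ≤ β) : 0 ≤ gapRatio p β :=
  div_nonneg (sub_nonneg.2 (exp_le_one_iff.2 (by linarith))) (gapRatio_denom_pos hp0 hp1 β).le

lemma strictMono_gapRatio (hp0 : 0 < p) (hp1 : p ≤ 1) : StrictMono (gapRatio p) := by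
  intro a b hab
  have hexp : exp (-(2 * b)) < exp (-(2 * a)) := exp_lt_exp.2 (by linarith)
  rw [gapRatio, gapRatio, div_lt_div_iff₀ (gapRatio_denom_pos hp0 hp1 a)
    (gapRatio_denom_pos hp0 hp1 b)]
  linarith

lemma continuous_gapRatio (hp0 : 0 < p) (hp1 : p ≤ 1) : Continuous (gapRatio p) :=
  Continuous.div (by fun_prop) (by fun_prop) fun β => (gapRatio_denom_pos hp0 hp1 β).ne'

lemma tendsto_gapRatio_atTop (hp0 : 0 < p) : Tendsto (gapRatio p) atTop (𝓝 (1 / p)) := by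
  have hexp : Tendsto (fun β : ℝ => exp (-(2 * β))) atTop (𝓝 0) :=
    tendsto_exp_neg_atTop_nhds_zero.comp (tendsto_id.const_mul_atTop two_pos)
  rw [show 1 / p = (1 - 0) / (p + (1 - p) * 0) by simp]
  exact (tendsto_const_nhds.sub hexp).div (tendsto_const_nhds.add (tendsto_const_nhds.mul hexp))
    (by simpa using hp0.ne')

lemma one_add_mul_gapRatio_sq (hp0 : 0 < p) (hp1 : p ≤ 1) (β : ℝ) :
    1 + p * (1 - p) * gapRatio p β ^ 2 =
      (p + (1 - p) * exp (-(4 * β))) / (p + (1 - p) * exp (-(2 * β))) ^ 2 := by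
  have hd := gapRatio_denom_pos hp0 hp1 β
  have hexp : exp (-(4 * β)) = exp (-(2 * β)) ^ 2 := by rw [← exp_nat_mul]; ring_nf
  rw [hexp, gapRatio]
  field_simp
  ring

lemma log_one_add_mul_gapRatio_sq (hp0 : 0 < p) (hp1 : p ≤ 1) (β : ℝ) :
    log (1 + p * (1 - p) * gapRatio p β ^ 2) =
      log (p + (1 - p) * exp (-(4 * β))) - 2 * log (p + (1 - p) * exp (-(2 * β))) := by
  have hnum : 0 < p + (1 - p) * exp (-(4 * β)) := by
    convert gapRatio_denom_pos hp0 hp1 (2 * β) using 4; ring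
  rw [one_add_mul_gapRatio_sq hp0 hp1,
    log_div hnum.ne' (pow_pos (gapRatio_denom_pos hp0 hp1 β) 2).ne', log_pow]
  push_cast
  ring

end gapRatio

theorem stmt_11 (p : ℝ) (hp : p ∈ Set.Ioo (0:ℝ) 1) (c : ℝ) (hc : 2 < c)
    (f : ℝ → ℝ) (hf : ∀ x, f x = -Real.log (p + (1 - p) * Real.exp (-x))) :
    (∃! β : ℝ, β ∈ Set.Ioi (0:ℝ) ∧
      f (2 * β) - f (4 * β) / 2 = Real.log (1 / p) / c) ∧
    StrictMonoOn (fun β => f (2 * β) - f (4 * β) / 2) (Set.Ici (0:ℝ)) ∧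
    f (2 * 0) - f (4 * 0) / 2 = 0 ∧
    Filter.Tendsto (fun β => f (2 * β) - f (4 * β) / 2) Filter.atTop
      (nhds (Real.log (1 / p) / 2)) := by
  obtain ⟨hp0, hp1⟩ := hp
  have hpq : 0 < p * (1 - p) := mul_pos hp0 (by linarith)
  have hg : (fun β => f (2 * β) - f (4 * β) / 2) =
      (fun x => log (1 + p * (1 - p) * x ^ 2) / 2) ∘ gapRatio p := by
    funext β
    simp only [Function.comp, log_one_add_mul_gapRatio_sq hp0 hp1.le, hf]
    ring
  have h0 : f (2 * 0) - f (4 * 0) / 2 = 0 := by simpa using congrFun hg 0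
  have hmono : StrictMonoOn (fun β => f (2 * β) - f (4 * β) / 2) (Ici 0) := by
    rw [hg]
    exact (strictMonoOn_log_one_add_mul_sq_div_two hpq).comp
      ((strictMono_gapRatio hp0 hp1.le).strictMonoOn _) fun β hβ => gapRatio_nonneg hp0 hp1.le hβ
  have hlim : Tendsto (fun β => f (2 * β) - f (4 * β) / 2) atTop (𝓝 (log (1 / p) / 2)) := by
    have hval : 1 + p * (1 - p) * (1 / p) ^ 2 = 1 / p := by field_simp; ring
    rw [hg, ← hval]
    exact ((continuous_log_one_add_mul_sq_div_two hpq.le).tendsto _).comp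
      (tendsto_gapRatio_atTop hp0)
  have hcont : ContinuousOn (fun β => f (2 * β) - f (4 * β) / 2) (Ici 0) := by
    rw [hg]
    exact ((continuous_log_one_add_mul_sq_div_two hpq.le).comp
      (continuous_gapRatio hp0 hp1.le)).continuousOn
  have hlog : 0 < log (1 / p) := log_pos (one_lt_one_div hp0 hp1)
  refine ⟨existsUnique_pos_eq_of_strictMonoOn hcont hmono hlim ⟨?_, ?_⟩, hmono, h0, hlim⟩
  · simpa only [h0] using div_pos hlog (by linarith)
  · exact div_lt_div_of_pos_left hlog two_pos hc
end

section
/- If c ∈ (1,2] and p ∈ (0,1), then for every β > 0, f(2β) - f(4β)/2 < ln(1/p)/c, where f(β) = -ln(p + (1-p)e^{-β}). -/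
theorem stmt_12 (p : ℝ) (hp : p ∈ Set.Ioo (0:ℝ) 1) (c : ℝ) (hc : c ∈ Set.Ioc (1:ℝ) 2)
    (f : ℝ → ℝ) (hf : ∀ x, f x = -Real.log (p + (1 - p) * Real.exp (-x)))
    (β : ℝ) (hβ : 0 < β) :
    f (2 * β) - f (4 * β) / 2 < Real.log (1 / p) / c := by
  obtain ⟨hp0, hp1⟩ := hp
  obtain ⟨hc1, hc2⟩ := hc
  set t := Real.exp (-(2*β)) with ht
  have ht0 : 0 < t := Real.exp_pos _
  have ht1 : t < 1 := by
    rw [ht, Real.exp_lt_one_iff]; linarith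
  have ha0 : 0 < p + (1-p) * t := by nlinarith
  have hb0 : 0 < p + (1-p) * (t*t) := by nlinarith
  have he4 : Real.exp (-(4*β)) = t*t := by
    rw [ht, ← Real.exp_add]; ring_nf
  have key : p * (p + (1-p)*(t*t)) < (p + (1-p)*t) * (p + (1-p)*t) := by
    nlinarith [mul_pos (mul_pos (sub_pos.mpr hp1) ht0) (show (0:ℝ) < 2*p*(1-t)+t by nlinarith)]
  have hlog : Real.log p + Real.log (p + (1-p)*(t*t)) <
      Real.log (p + (1-p)*t) + Real.log (p + (1-p)*t) := by
    have h := Real.log_lt_log (by positivity) key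
    rwa [Real.log_mul (ne_of_gt hp0) (ne_of_gt hb0),
      Real.log_mul (ne_of_gt ha0) (ne_of_gt ha0)] at h
  have hlp : Real.log (1/p) = -Real.log p := by rw [one_div, Real.log_inv]
  have hlpp : 0 < Real.log (1/p) := by
    rw [hlp]; linarith [Real.log_neg hp0 hp1]
  have hstep : Real.log (1/p) / 2 ≤ Real.log (1/p) / c := by
    gcongr
  have hf2 : f (2*β) = -Real.log (p + (1-p) * t) := by rw [hf]
  have hf4 : f (4*β) = -Real.log (p + (1-p) * (t*t)) := by rw [hf, he4]
  rw [hf2, hf4]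
  have : -Real.log (p + (1-p) * t) - -Real.log (p + (1-p) * (t*t)) / 2 <
      Real.log (1/p) / 2 := by rw [hlp]; linarith
  linarith
end
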